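/- Let (X,f) and (Y,g) be minimal topological dynamical systems on compact metric spaces, and suppose there exist points x ∈ X and y ∈ Y such that for every strictly increasing sequence (n_k) of natural numbers, (f^{n_k}x) converges in X if and only if (g^{n_k}y) converges in Y. Then (X,f) and (Y,g) are topologically conjugate. -/

import Mathlib

/-!
The joint cluster points of the orbit pair `k ↦ (f^[k] x, g^[k] y)` form a closed set
`R ⊆ X × Y` invariant under `f × g`. By minimality every point of `X` and of `Y` is a cluster
point of the respective orbit, so `R` projects onto both factors, and the hypothesis on
subsequences makes `R` the graph of a bijection. A bijection with closed graph between compact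
Hausdorff spaces is a homeomorphism, and invariance of `R` says that it conjugates `f` to `g`.
-/

open Filter Topology Function Set

section Orbits

variable {X : Type*} [TopologicalSpace X]

theorem mapClusterPt_atTop_succ_iff {u : ℕ → X} {a : X} :
    MapClusterPt a atTop (fun k => u (k + 1)) ↔ MapClusterPt a atTop u := by
  rw [show (fun k => u (k + 1)) = u ∘ (· + 1) from rfl, mapClusterPt_comp, map_add_atTop_eq_nat]

theorem MapClusterPt.apply_of_iterate {f : X → X} {z a : X} (hf : ContinuousAt f a)
    (ha : MapClusterPt a atTop fun k => f^[k] z) : MapClusterPt (f a) atTop fun k => f^[k] z := by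
  rw [← mapClusterPt_atTop_succ_iff]
  simp only [iterate_succ_apply']
  exact ha.continuousAt_comp hf

theorem Homeomorph.mapClusterPt_apply_iff (f : X ≃ₜ X) {z a : X} :
    (MapClusterPt (f a) atTop fun k => f^[k] z) ↔ MapClusterPt a atTop fun k => f^[k] z := by
  refine ⟨fun h => ?_, fun h => h.apply_of_iterate f.continuous.continuousAt⟩
  rw [← mapClusterPt_atTop_succ_iff] at h
  simpa only [iterate_succ_apply', comp_def, Homeomorph.symm_apply_apply] using
    h.continuousAt_comp f.symm.continuous.continuousAt

theorem Homeomorph.mapClusterPt_zpow_apply_iff (f : X ≃ₜ X) (n : ℤ) {z a : X} :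
    (MapClusterPt ((f.toEquiv ^ n) a) atTop fun k => f^[k] z) ↔
      MapClusterPt a atTop fun k => f^[k] z := by
  induction n using Int.induction_on generalizing a with
  | zero => rfl
  | succ i ih =>
    rw [zpow_add_one, Equiv.Perm.mul_apply, ih]
    exact f.mapClusterPt_apply_iff
  | pred i ih =>
    rw [zpow_sub_one, Equiv.Perm.mul_apply, ih, ← f.mapClusterPt_apply_iff]
    simp

theorem Homeomorph.mapClusterPt_iterate_of_dense_zpow_orbit [CompactSpace X] (f : X ≃ₜ X)
    (hmin : ∀ x : X, Dense (range fun n : ℤ => (f.toEquiv ^ n) x)) (z a : X) :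
    MapClusterPt a atTop fun k => f^[k] z := by
  obtain ⟨a₀, ha₀⟩ := exists_clusterPt_of_compactSpace (map (fun k => f^[k] z) atTop)
  have horbit : closure (range fun n : ℤ => (f.toEquiv ^ n) a₀) ⊆
      {a | MapClusterPt a atTop fun k => f^[k] z} :=
    closure_minimal (range_subset_iff.2 fun n => (f.mapClusterPt_zpow_apply_iff n).2 ha₀)
      isClosed_setOfPred_clusterPt
  exact horbit ((hmin a₀).closure_eq ▸ mem_univ a)

end Orbits

section JointClusterPoints

variable {X Y : Type*} [TopologicalSpace X] [TopologicalSpace Y] {u : ℕ → X} {v : ℕ → Y}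

theorem MapClusterPt.prod_swap {F : Filter ℕ} {a : X} {b : Y}
    (h : MapClusterPt (a, b) F fun k => (u k, v k)) : MapClusterPt (b, a) F fun k => (v k, u k) :=
  h.continuousAt_comp continuous_swap.continuousAt

theorem MapClusterPt.exists_prod [FirstCountableTopology X]
    (huv : ∀ φ : ℕ → ℕ, StrictMono φ →
      (∃ a, Tendsto (fun k => u (φ k)) atTop (𝓝 a)) →
        ∃ b, Tendsto (fun k => v (φ k)) atTop (𝓝 b))
    {a : X} (ha : MapClusterPt a atTop u) :
    ∃ b, MapClusterPt (a, b) atTop fun k => (u k, v k) := by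
  obtain ⟨φ, hφ, hu⟩ := ha.tendsto_subseq
  obtain ⟨b, hv⟩ := huv φ hφ ⟨a, hu⟩
  exact ⟨b, (hu.prodMk_nhds hv).mapClusterPt.of_comp hφ.tendsto_atTop⟩

/-- Two joint cluster points over the same `a` are merged into one subsequence along which
`u` converges to `a` while `v` alternates between them; so `v` must converge along it. -/
theorem MapClusterPt.eq_of_prod [FirstCountableTopology X] [FirstCountableTopology Y] [T2Space Y]
    (huv : ∀ φ : ℕ → ℕ, StrictMono φ →
      (∃ a, Tendsto (fun k => u (φ k)) atTop (𝓝 a)) →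
        ∃ b, Tendsto (fun k => v (φ k)) atTop (𝓝 b))
    {a : X} {b c : Y} (hb : MapClusterPt (a, b) atTop fun k => (u k, v k))
    (hc : MapClusterPt (a, c) atTop fun k => (u k, v k)) : b = c := by
  obtain ⟨U, hU⟩ := (𝓝 a).exists_antitone_basis
  obtain ⟨V, hV⟩ := (𝓝 b).exists_antitone_basis
  obtain ⟨W, hW⟩ := (𝓝 c).exists_antitone_basis
  obtain ⟨φ, hφ, hmem⟩ := extraction_forall_of_frequently
    (P := fun j k => u k ∈ U j ∧ v k ∈ if Even j then V j else W j) fun j => by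
      rcases Nat.even_or_odd j with hj | hj
      · simpa [hj] using
          hb.frequently (p := (· ∈ U j ×ˢ V j)) (prod_mem_nhds (hU.mem j) (hV.mem j))
      · simpa [Nat.not_even_iff_odd.2 hj] using
          hc.frequently (p := (· ∈ U j ×ˢ W j)) (prod_mem_nhds (hU.mem j) (hW.mem j))
  obtain ⟨d, hd⟩ := huv φ hφ ⟨a, hU.tendsto fun j => (hmem j).1⟩
  have hvb : Tendsto (fun j => v (φ (2 * j))) atTop (𝓝 b) := hV.tendsto fun j =>
    hV.antitone (by omega : j ≤ 2 * j) (by simpa using (hmem (2 * j)).2)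
  have hvc : Tendsto (fun j => v (φ (2 * j + 1))) atTop (𝓝 c) := hW.tendsto fun j =>
    hW.antitone (by omega : j ≤ 2 * j + 1) (by simpa using (hmem (2 * j + 1)).2)
  have hdb : Tendsto (fun j => v (φ (2 * j))) atTop (𝓝 d) :=
    hd.comp (StrictMono.tendsto_atTop fun i j h => by omega)
  have hdc : Tendsto (fun j => v (φ (2 * j + 1))) atTop (𝓝 d) :=
    hd.comp (StrictMono.tendsto_atTop fun i j h => by omega)
  exact (tendsto_nhds_unique hvb hdb).trans (tendsto_nhds_unique hvc hdc).symm

end JointClusterPoints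

theorem exists_homeomorph_of_isClosed_of_existsUnique {X Y : Type*}
    [TopologicalSpace X] [CompactSpace X] [TopologicalSpace Y] [CompactSpace Y] [T2Space Y]
    {R : Set (X × Y)} (hR : IsClosed R) (hX : ∀ a, ∃! b, (a, b) ∈ R)
    (hY : ∀ b, ∃! a, (a, b) ∈ R) : ∃ h : X ≃ₜ Y, ∀ a, (a, h a) ∈ R := by
  choose H hH hHu using hX
  have hbij : Bijective H :=
    ⟨fun a a' e => (hY (H a)).unique (hH a) (e ▸ hH a'),
      fun b => (hY b).exists.imp fun a ha => (hHu a b ha).symm⟩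
  -- closed graph theorem: projecting along the compact factor `Y` is a closed map
  have hcont : Continuous H := continuous_iff_isClosed.2 fun C hC => by
    have hpre : H ⁻¹' C = Prod.fst '' (R ∩ univ ×ˢ C) := by
      ext a
      refine ⟨fun ha => ⟨(a, H a), ⟨hH a, mem_univ a, ha⟩, rfl⟩, ?_⟩
      rintro ⟨⟨a, b⟩, ⟨hab, -, hb⟩, rfl⟩
      exact (hHu a b hab).symm ▸ hb
    rw [hpre]
    exact isClosedMap_fst_of_compactSpace _ (hR.inter (isClosed_univ.prod hC))
  exact ⟨hcont.homeoOfEquivCompactToT2 (f := Equiv.ofBijective H hbij), hH⟩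

/-- If two minimal systems have points whose forward orbit sequences have the
same convergent subsequences, then the systems are topologically conjugate. -/
theorem conjugate_of_same_convergent_subsequences {X Y : Type*}
    [MetricSpace X] [CompactSpace X] [MetricSpace Y] [CompactSpace Y]
    (f : X ≃ₜ X) (g : Y ≃ₜ Y)
    (hXmin : ∀ x : X, Dense (Set.range fun n : ℤ => (f.toEquiv ^ n) x))
    (hYmin : ∀ y : Y, Dense (Set.range fun n : ℤ => (g.toEquiv ^ n) y))
    (x : X) (y : Y)
    (htt : ∀ n : ℕ → ℕ, StrictMono n →
      ((∃ a : X, Filter.Tendsto (fun k => (⇑f)^[n k] x) Filter.atTop (nhds a)) ↔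
       (∃ b : Y, Filter.Tendsto (fun k => (⇑g)^[n k] y) Filter.atTop (nhds b)))) :
    ∃ h : X ≃ₜ Y, ∀ x' : X, h (f x') = g (h x') := by
  set R := {p : X × Y | MapClusterPt p atTop fun k => (Prod.map f g)^[k] (x, y)}
  have hfg := fun φ hφ => (htt φ hφ).1
  have hgf := fun φ hφ => (htt φ hφ).2
  have hX : ∀ a, ∃! b, (a, b) ∈ R := fun a => by
    simp only [R, mem_ofPred_eq, Prod.map_iterate, Prod.map_apply]
    obtain ⟨b, hb⟩ :=
      (f.mapClusterPt_iterate_of_dense_zpow_orbit hXmin x a).exists_prod (v := (g^[·] y)) hfg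
    exact ⟨b, hb, fun c hc => hc.eq_of_prod hfg hb⟩
  have hY : ∀ b, ∃! a, (a, b) ∈ R := fun b => by
    simp only [R, mem_ofPred_eq, Prod.map_iterate, Prod.map_apply]
    obtain ⟨a, ha⟩ :=
      (g.mapClusterPt_iterate_of_dense_zpow_orbit hYmin y b).exists_prod (v := (f^[·] x)) hgf
    exact ⟨a, ha.prod_swap, fun c hc => hc.prod_swap.eq_of_prod hgf ha⟩
  obtain ⟨h, hh⟩ :=
    exists_homeomorph_of_isClosed_of_existsUnique isClosed_setOfPred_clusterPt hX hY
  refine ⟨h, fun a => (hX (f a)).unique (hh (f a)) ?_⟩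
  exact MapClusterPt.apply_of_iterate (f := Prod.map f g) (by fun_prop) (hh a)
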